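/- arXiv:1611.02889 — 5 statements merged into one kernel-verified Lean document; each statement's English description precedes it below -/
import Mathlib

section
/- For every real z ≠ 0 and every integer k ≥ 1, the squares of the spherical Bessel functions satisfy the four-term recurrence relation: (2k−1)[j_{k−1}(z)]² − (2k+1)[j_k(z)]² = (z²/(2k−1))·([j_{k−2}(z)]² − [j_k(z)]²) + (z²/(2k+1))·([j_{k−1}(z)]² − [j_{k+1}(z)]²). -/
open Finset

/-- Auxiliary: `sphjAux z n` is the spherical Bessel function `j_{n-1}(z)`. -/
noncomputable def sphjAux (z : ℝ) : ℕ → ℝ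
  | 0 => Real.cos z / z
  | 1 => Real.sin z / z
  | (n + 2) => ((2 * (n : ℝ) + 1) / z) * sphjAux z (n + 1) - sphjAux z n

/-- The spherical Bessel function `j_k(z)` for integer `k ≥ -1`. -/
noncomputable def sphj (k : ℤ) (z : ℝ) : ℝ := sphjAux z (k + 1).toNat

/-- Four-term recurrence for squares of spherical Bessel functions. -/
theorem squared_bessel_four_term_recurrence (z : ℝ) (hz : z ≠ 0) (k : ℤ) (hk : 1 ≤ k) :
    (2 * (k : ℝ) - 1) * (sphj (k - 1) z) ^ 2 - (2 * (k : ℝ) + 1) * (sphj k z) ^ 2 =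
      z ^ 2 / (2 * (k : ℝ) - 1) * ((sphj (k - 2) z) ^ 2 - (sphj k z) ^ 2) +
        z ^ 2 / (2 * (k : ℝ) + 1) * ((sphj (k - 1) z) ^ 2 - (sphj (k + 1) z) ^ 2) := by
  obtain ⟨n, rfl⟩ : ∃ n : ℕ, k = (n : ℤ) + 1 := by
    refine ⟨(k - 1).toNat, ?_⟩
    omega
  have h1 : sphj ((n : ℤ) + 1 - 2) z = sphjAux z n := by
    unfold sphj
    congr 1
    omega
  have h2 : sphj ((n : ℤ) + 1 - 1) z = sphjAux z (n + 1) := by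
    unfold sphj
    congr 1
    omega
  have h3 : sphj ((n : ℤ) + 1) z = sphjAux z (n + 2) := by
    unfold sphj
    congr 1
  have h4 : sphj ((n : ℤ) + 1 + 1) z = sphjAux z (n + 3) := by
    unfold sphj
    congr 1
  rw [h1, h2, h3, h4]
  set a := sphjAux z n with ha
  set b := sphjAux z (n + 1) with hb
  have hc : sphjAux z (n + 2) = ((2 * (n : ℝ) + 1) / z) * b - a := rfl
  have hd : sphjAux z (n + 3) = ((2 * ((n : ℝ) + 1) + 1) / z) * sphjAux z (n + 2) - b := by
    show sphjAux z ((n + 1) + 2) = _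
    rw [sphjAux, hb]
    push_cast
    ring
  rw [hd, hc]
  have hn : (0:ℝ) ≤ (n:ℝ) := Nat.cast_nonneg n
  have hz2 : (2 * ((n : ℝ) + 1) - 1) ≠ 0 := by nlinarith
  have hz3 : (2 * ((n : ℝ) + 1) + 1) ≠ 0 := by nlinarith
  push_cast
  field_simp
  ring
end

section
/- Let a : ℕ → ℝ be an arbitrary sequence, and for k ≥ 1 set f_k = (2k+1)(a_{k+1} − a_k) and g_k = (a_{k+2}+a_{k+1})/(2k+3) − (a_k+a_{k−1})/(2k−1). For real z ≠ 0 define, for ℓ ≥ 1, E_ℓ(z) = Σ_{k=1}^{ℓ} f_k [j_k(z)]² − z² Σ_{k=1}^{ℓ} g_k [j_k(z)]² + (z²/(2ℓ+3))(a_{ℓ+1}+a_{ℓ+2})[j_ℓ(z)]² + (z²/(2ℓ+1))(a_{ℓ+1}+a_ℓ)[j_{ℓ+1}(z)]² − 2z·a_{ℓ+1}·j_ℓ(z)·j_{ℓ+1}(z). Then E_ℓ(z) is independent of ℓ: E_ℓ(z) = E_1(z) for all ℓ ≥ 1. -/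
open Finset

/-- `f_k = (2k+1)(a_{k+1} - a_k)`. -/
noncomputable def fCoeff (a : ℕ → ℝ) (k : ℕ) : ℝ := (2 * (k : ℝ) + 1) * (a (k + 1) - a k)

/-- `g_k = (a_{k+2}+a_{k+1})/(2k+3) - (a_k+a_{k-1})/(2k-1)`. -/
noncomputable def gCoeff (a : ℕ → ℝ) (k : ℕ) : ℝ :=
  (a (k + 2) + a (k + 1)) / (2 * (k : ℝ) + 3) - (a k + a (k - 1)) / (2 * (k : ℝ) - 1)

/-- The combination `E_ℓ(z)` built from the weighted sums of squared spherical Bessel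
functions and the boundary terms. -/
noncomputable def Ecomb (a : ℕ → ℝ) (z : ℝ) (ℓ : ℕ) : ℝ :=
  ∑ k ∈ Finset.Icc 1 ℓ, fCoeff a k * (sphj k z) ^ 2 -
    z ^ 2 * ∑ k ∈ Finset.Icc 1 ℓ, gCoeff a k * (sphj k z) ^ 2 +
    (z ^ 2 / (2 * (ℓ : ℝ) + 3)) * (a (ℓ + 1) + a (ℓ + 2)) * (sphj ℓ z) ^ 2 +
    (z ^ 2 / (2 * (ℓ : ℝ) + 1)) * (a (ℓ + 1) + a ℓ) * (sphj (ℓ + 1) z) ^ 2 -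
    2 * z * a (ℓ + 1) * sphj ℓ z * sphj (ℓ + 1) z


lemma sphj_rec (z : ℝ) (n : ℕ) :
    sphj ((n : ℤ) + 2) z = ((2 * (n : ℝ) + 3) / z) * sphj ((n : ℤ) + 1) z - sphj n z := by
  have h2 : ((n : ℤ) + 2) = ((n + 2 : ℕ) : ℤ) := by push_cast; ring
  have h1 : ((n : ℤ) + 1) = ((n + 1 : ℕ) : ℤ) := by push_cast; ring
  have hn : ∀ m : ℕ, sphj m z = sphjAux z (m + 1) := fun m => by simp [sphj]
  rw [h2, h1, hn, hn, hn]
  show sphjAux z (n + 1 + 2) = _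
  rw [sphjAux]
  push_cast; ring_nf

lemma Ecomb_step (a : ℕ → ℝ) (z : ℝ) (hz : z ≠ 0) (ℓ : ℕ) (hℓ : 1 ≤ ℓ) :
    Ecomb a z (ℓ + 1) = Ecomb a z ℓ := by
  have hsum : ∀ F : ℕ → ℝ, ∑ k ∈ Finset.Icc 1 (ℓ + 1), F k = ∑ k ∈ Finset.Icc 1 ℓ, F k + F (ℓ + 1) :=
    fun F => Finset.sum_Icc_succ_top (by omega) F
  have hcast1 : ((ℓ + 1 : ℕ) : ℤ) = (ℓ : ℤ) + 1 := by push_cast; ring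
  have hcast2 : ((ℓ : ℤ) + 1) + 1 = (ℓ : ℤ) + 2 := by ring
  unfold Ecomb
  rw [hsum, hsum, hcast1, hcast2, sphj_rec z ℓ]
  unfold fCoeff gCoeff
  have hsub : (ℓ + 1 : ℕ) - 1 = ℓ := by omega
  rw [hsub]
  set J0 := sphj ℓ z
  set J1 := sphj ((ℓ : ℤ) + 1) z
  have h1 : (2 * (ℓ : ℝ) + 1) ≠ 0 := by positivity
  have h3 : (2 * (ℓ : ℝ) + 3) ≠ 0 := by positivity
  have h5 : (2 * (ℓ : ℝ) + 5) ≠ 0 := by positivity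
  have e1 : ℓ + 1 + 1 = ℓ + 2 := rfl
  have e2 : ℓ + 1 + 2 = ℓ + 3 := rfl
  simp only [e1, e2]
  push_cast
  have h1' : 2 * ((ℓ : ℝ) + 1) - 1 ≠ 0 := by
    have : 2 * ((ℓ : ℝ) + 1) - 1 = 2 * (ℓ : ℝ) + 1 := by ring
    rw [this]; exact h1
  field_simp
  ring

/-- `E_ℓ(z)` is independent of `ℓ`. -/
theorem Ecomb_independent_of_ell (a : ℕ → ℝ) (z : ℝ) (hz : z ≠ 0) (ℓ : ℕ) (hℓ : 1 ≤ ℓ) :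
    Ecomb a z ℓ = Ecomb a z 1 := by
  induction ℓ with
  | zero => omega
  | succ n ih =>
    rcases Nat.lt_or_ge 1 (n + 1) with h | h
    · have hn : 1 ≤ n := by omega
      rw [Ecomb_step a z hz n hn, ih hn]
    · have : n + 1 = 1 := by omega
      rw [this]
end

section
/- For every real z ≠ 0 and every integer ℓ ≥ 0: Σ_{k=0}^{ℓ} [j_k(z)]²/((2k−1)(2k+3)) = −[j_ℓ(z)]²/(4(2ℓ+3)) − [j_{ℓ+1}(z)]²/(4(2ℓ+1)) + j_ℓ(z)·j_{ℓ+1}(z)/(4z) − j_1(2z)/(2z). -/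
open Finset

lemma sphj_nat (k : ℕ) (z : ℝ) : sphj k z = sphjAux z (k + 1) := by
  simp [sphj]

lemma sphjAux_rec (z : ℝ) (n : ℕ) :
    sphjAux z (n + 2) = ((2 * (n : ℝ) + 1) / z) * sphjAux z (n + 1) - sphjAux z n := rfl

/-- Sum rule `∑_{k=0}^{ℓ} [j_k(z)]²/((2k-1)(2k+3)) = …`. -/
theorem sum_rule_one_over_2km1_2kp3 (z : ℝ) (hz : z ≠ 0) (ℓ : ℕ) :
    ∑ k ∈ Finset.range (ℓ + 1), (sphj k z) ^ 2 / ((2 * (k : ℝ) - 1) * (2 * (k : ℝ) + 3)) =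
      -(sphj ℓ z) ^ 2 / (4 * (2 * (ℓ : ℝ) + 3)) - (sphj (ℓ + 1) z) ^ 2 / (4 * (2 * (ℓ : ℝ) + 1)) +
        sphj ℓ z * sphj (ℓ + 1) z / (4 * z) - sphj 1 (2 * z) / (2 * z) := by
  induction ℓ with
  | zero =>
    rw [Finset.sum_range_one]
    norm_num
    have h0 : sphj 0 z = Real.sin z / z := rfl
    have h1 : sphj 1 z = (1 / z) * (Real.sin z / z) - Real.cos z / z := by
      show sphjAux z 2 = _
      rw [sphjAux_rec]; simp [sphjAux]
    have h2 : sphj 1 (2 * z) = (1 / (2 * z)) * (Real.sin (2 * z) / (2 * z)) -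
        Real.cos (2 * z) / (2 * z) := by
      show sphjAux (2 * z) 2 = _
      rw [sphjAux_rec]; simp [sphjAux]
    rw [h0, h1, h2, Real.sin_two_mul, Real.cos_two_mul]
    have hpy : Real.sin z ^ 2 = 1 - Real.cos z ^ 2 := by
      have := Real.sin_sq_add_cos_sq z; linarith
    field_simp
    ring_nf
    linear_combination (-(144 * z ^ 2)) * Real.sin_sq_add_cos_sq z
  | succ n ih =>
    rw [Finset.sum_range_succ, ih]
    have hrec : sphj ((n : ℤ) + 1 + 1) z =
        ((2 * ((n : ℝ) + 1) + 1) / z) * sphj ((n : ℤ) + 1) z - sphj n z := by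
      have e1 : sphj ((n : ℤ) + 1 + 1) z = sphjAux z (n + 3) := by
        have : ((n : ℤ) + 1 + 1) = ((n + 2 : ℕ) : ℤ) := by push_cast; ring
        rw [this, sphj_nat]
      have e2 : sphj ((n : ℤ) + 1) z = sphjAux z (n + 2) := by
        have : ((n : ℤ) + 1) = ((n + 1 : ℕ) : ℤ) := by push_cast; ring
        rw [this, sphj_nat]
      rw [e1, e2, sphj_nat]
      have := sphjAux_rec z (n + 1)
      rw [this]; push_cast; ring
    have hc : ((n + 1 : ℕ) : ℤ) = (n : ℤ) + 1 := by push_cast; ring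
    have hc2 : ((n + 1 : ℕ) : ℝ) = (n : ℝ) + 1 := by push_cast; ring
    rw [hc, hc2, hrec]
    have d1 : (2 * (n : ℝ) + 1) ≠ 0 := by positivity
    have d3 : (2 * (n : ℝ) + 3) ≠ 0 := by positivity
    have d5 : (2 * ((n : ℝ) + 1) + 3) ≠ 0 := by positivity
    have d1' : (2 * ((n : ℝ) + 1) - 1) ≠ 0 := by
      have : (2 * ((n : ℝ) + 1) - 1) = 2 * (n : ℝ) + 1 := by ring
      rw [this]; exact d1
    field_simp
    ring
end

section
/- Let a : ℕ → ℝ satisfy (a_{k+2}+a_{k+1})/(2k+3) = (a_k+a_{k−1})/(2k−1) for all integers k ≥ 1. Then for every integer k ≥ 0: a_k = [k/2 + (−1)^{k+1}(k²/2 − 1)]·a_0 + [2k/3 + (−1)^{k+1}·k²/3]·a_1 + [k/6 + (−1)^k·k²/6]·a_2. -/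
noncomputable def frm (a : ℕ → ℝ) (k : ℕ) : ℝ :=
  ((k : ℝ) / 2 + (-1 : ℝ) ^ (k + 1) * ((k : ℝ) ^ 2 / 2 - 1)) * a 0 +
    (2 * (k : ℝ) / 3 + (-1 : ℝ) ^ (k + 1) * (k : ℝ) ^ 2 / 3) * a 1 +
    ((k : ℝ) / 6 + (-1 : ℝ) ^ k * (k : ℝ) ^ 2 / 6) * a 2

/-- Explicit solution of the recurrence `(a_{k+2}+a_{k+1})/(2k+3) = (a_k+a_{k-1})/(2k-1)`
in terms of the initial values `a_0`, `a_1`, `a_2`. -/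
theorem recurrence_explicit_solution (a : ℕ → ℝ)
    (ha : ∀ k : ℕ, 1 ≤ k →
      (a (k + 2) + a (k + 1)) / (2 * (k : ℝ) + 3) = (a k + a (k - 1)) / (2 * (k : ℝ) - 1)) :
    ∀ k : ℕ,
      a k = ((k : ℝ) / 2 + (-1 : ℝ) ^ (k + 1) * ((k : ℝ) ^ 2 / 2 - 1)) * a 0 +
        (2 * (k : ℝ) / 3 + (-1 : ℝ) ^ (k + 1) * (k : ℝ) ^ 2 / 3) * a 1 +
        ((k : ℝ) / 6 + (-1 : ℝ) ^ k * (k : ℝ) ^ 2 / 6) * a 2 := by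
  suffices h : ∀ n : ℕ, a n = frm a n ∧ a (n+1) = frm a (n+1) ∧ a (n+2) = frm a (n+2) by
    intro k; exact (h k).1
  intro n
  induction n with
  | zero =>
    refine ⟨?_, ?_, ?_⟩ <;> first | (simp [frm]; norm_num) | simp [frm]
  | succ m ih =>
    obtain ⟨h0, h1, h2⟩ := ih
    refine ⟨h1, h2, ?_⟩
    have key := ha (m + 1) (by omega)
    push_cast at key
    rw [show m+1+2 = m+3 by omega] at key ⊢
    rw [h0, h1, h2] at key
    have hne1 : (2 * (m : ℝ) + 1) ≠ 0 := by positivity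
    have hne2 : (2 * (m : ℝ) + 5) ≠ 0 := by positivity
    have hstep : a (m + 3) = (2 * (m : ℝ) + 5) / (2 * (m : ℝ) + 1) * (frm a (m+1) + frm a m) - frm a (m + 2) := by
      have h5 : 2 * ((m:ℝ)+1) + 3 = 2 * (m:ℝ) + 5 := by ring
      have h1' : 2 * ((m:ℝ)+1) - 1 = 2 * (m:ℝ) + 1 := by ring
      rw [h5, h1'] at key
      field_simp at key ⊢
      linarith [key]
    rw [hstep]
    simp only [frm, pow_succ]
    push_cast
    rcases Nat.even_or_odd m with he | ho
    · rw [he.neg_one_pow]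
      field_simp
      ring
    · rw [ho.neg_one_pow]
      field_simp
      ring
end

section
/- For every real z ≠ 0 and every integer ℓ ≥ 0: Σ_{k=0}^{ℓ} (−1)^k (2k+1)·k(k+1)·[j_k(z)]² = (1/2)(−1)^ℓ z² [j_ℓ(z)]² − (1/2)(−1)^ℓ z² [j_{ℓ+1}(z)]² + (−1)^ℓ (ℓ² + 2ℓ + 1/2)·z·j_ℓ(z)·j_{ℓ+1}(z) − z·j_1(2z). -/
open Finset

/-- Sum rule `∑_{k=0}^{ℓ} (-1)^k (2k+1) k (k+1) [j_k(z)]² = …`. -/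
theorem sum_rule_alternating_quadratic (z : ℝ) (hz : z ≠ 0) (ℓ : ℕ) :
    ∑ k ∈ Finset.range (ℓ + 1),
        (-1 : ℝ) ^ k * (2 * (k : ℝ) + 1) * (k : ℝ) * ((k : ℝ) + 1) * (sphj k z) ^ 2 =
      (1 / 2) * (-1 : ℝ) ^ ℓ * z ^ 2 * (sphj ℓ z) ^ 2 -
        (1 / 2) * (-1 : ℝ) ^ ℓ * z ^ 2 * (sphj (ℓ + 1) z) ^ 2 +
        (-1 : ℝ) ^ ℓ * ((ℓ : ℝ) ^ 2 + 2 * (ℓ : ℝ) + 1 / 2) * z * sphj ℓ z * sphj (ℓ + 1) z -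
        z * sphj 1 (2 * z) := by
  have hcoe : ∀ (w : ℝ) (n : ℕ), sphj n w = sphjAux w (n + 1) := by
    intro w n
    unfold sphj
    congr 1
  have hcoe' : ∀ (w : ℝ) (n : ℕ), sphj ((n : ℤ) + 1) w = sphjAux w (n + 2) := by
    intro w n
    unfold sphj
    congr 1
  induction ℓ with
  | zero =>
      simp only [Finset.sum_range_succ, Finset.sum_range_zero]
      have h1 : sphj 1 (2 * z) = sphjAux (2 * z) 2 := rfl
      have h0 : sphj (0 : ℤ) z = sphjAux z 1 := rfl
      have h0' : sphj (1 : ℤ) z = sphjAux z 2 := rfl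
      push_cast
      rw [h1, h0', h0]
      simp only [sphjAux]
      rw [Real.sin_two_mul, Real.cos_two_mul']
      have h2z : (2 : ℝ) * z ≠ 0 := by positivity
      field_simp
      ring
  | succ n ih =>
      rw [Finset.sum_range_succ, ih]
      have hrec : sphjAux z (n + 3) =
          ((2 * ((n : ℝ) + 1) + 1) / z) * sphjAux z (n + 2) - sphjAux z (n + 1) := by
        show sphjAux z ((n + 1) + 2) = _
        simp only [sphjAux]
        push_cast
        ring
      rw [hcoe z (n + 1), hcoe z n, hcoe' z n, hcoe' z (n + 1)]
      push_cast
      rw [hrec]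
      field_simp
      ring
end
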